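/- arXiv:1105.5422 — 3 statements merged into one kernel-verified Lean document; each statement's English description precedes it below -/
import Mathlib

section
/- Infinite Girth Criterion: Let G be a group acting on a set X, generated by a finite set {γ₁, …, γₙ}. Suppose there exist elements σ, τ ∈ G, subsets U_σ, U_τ ⊆ X, and a point x ∈ X such that: (1) x does not lie in (U_σ ∪ U_τ) ∪ ⋃_{ε=±1} ⋃_{i=1}^{n} γᵢ^ε(U_σ ∪ U_τ); (2) for every nonzero integer k, σ^k({x} ∪ U_τ ∪ ⋃_{ε=±1} ⋃_{i=1}^{n} γᵢ^ε(U_τ)) ⊆ U_σ; and (3) for every nonzero integer k, τ^k({x} ∪ U_σ ∪ ⋃_{ε=±1} ⋃_{i=1}^{n} γᵢ^ε(U_σ)) ⊆ U_τ. Then G is not a cyclic group and G has infinite girth. -/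
/-!
For every `m`, the generating set `{σ, τ} ∪ {σ ^ M i * γ i * τ ^ M i}` has girth at least `m`
as soon as `m ≤ |M i|` and `m ≤ |M i - M j|` for `i ≠ j`. Apply a reduced word of length `< m`
to `x` letter by letter, from the right: the point is always `σ ^ e • p` with `p` in the set
of condition (2), or `τ ^ e • p` with `p` in the set of condition (3), where `e` is the exponent
of the current run of `σ`- (resp. `τ`-)powers, possibly shifted by `± M j`. That exponent is
never `0` because the `M i` are spread out, so the word moves `x` into `U_σ ∪ U_τ` and is not
`1`. Ping-pong on the commutator of `σ` and `τ` shows that `G` is not abelian.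
-/

open Pointwise

/-- A nonempty reduced word in the letters `S ∪ S⁻¹` (no letter immediately followed by
its inverse) that represents the identity element of the group. -/
def IsRelatorWord {G : Type*} [Group G] (S : Set G) (w : List G) : Prop :=
  w ≠ [] ∧ (∀ g ∈ w, g ∈ S ∨ g⁻¹ ∈ S) ∧ List.Chain' (fun a b => b ≠ a⁻¹) w ∧ w.prod = 1

/-- The girth `U(G,S)` of the Cayley graph of `G` with respect to `S`: the infimum in `ℕ∞`
of the lengths of nonempty reduced words in the letters `S ∪ S⁻¹` representing `1`. -/
noncomputable def girthWith {G : Type*} [Group G] (S : Set G) : ℕ∞ :=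
  ⨅ w ∈ {w : List G | IsRelatorWord S w}, (w.length : ℕ∞)

/-- The girth `U(G)` of a group `G`: the supremum of `U(G,S)` over all finite
generating sets `S` of `G`. -/
noncomputable def groupGirth (G : Type*) [Group G] : ℕ∞ :=
  ⨆ S ∈ {S : Finset G | Subgroup.closure (S : Set G) = ⊤}, girthWith (S : Set G)

structure PingPong (G X : Type*) [Group G] [MulAction G X] (n : ℕ) where
  σ : G
  τ : G
  γ : Fin n → G
  U : Set X
  V : Set X
  D : Set X
  E : Set X
  x : X
  smul_D_subset : ∀ k : ℤ, k ≠ 0 → σ ^ k • D ⊆ U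
  smul_E_subset : ∀ k : ℤ, k ≠ 0 → τ ^ k • E ⊆ V
  U_subset_E : U ⊆ E
  V_subset_D : V ⊆ D
  γ_smul_V_subset : ∀ i, γ i • V ⊆ D
  γ_inv_smul_U_subset : ∀ i, (γ i)⁻¹ • U ⊆ E
  x_mem_D : x ∈ D
  x_mem_E : x ∈ E

def IsSeparated {ι : Type*} (m : ℕ) (M : ι → ℤ) : Prop :=
  (∀ i, m ≤ (M i).natAbs) ∧ Pairwise fun i j => m ≤ (M i - M j).natAbs

theorem IsSeparated.neg {ι : Type*} {m : ℕ} {M : ι → ℤ} (hM : IsSeparated m M) :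
    IsSeparated m (-M) :=
  ⟨fun i => by simpa using hM.1 i, fun i j hij => by
    simpa [neg_add_eq_sub, ← Int.natAbs_neg (M i - M j)] using hM.2 hij⟩

theorem exists_isSeparated (n m : ℕ) : ∃ M : Fin n → ℤ, IsSeparated m M := by
  refine ⟨fun i => m * (i + 1), fun i => ?_, fun i j hij => ?_⟩
  · simp only [Int.natAbs_mul, Int.natAbs_natCast]
    exact Nat.le_mul_of_pos_right m (by omega)
  · have : (i : ℤ) ≠ j := by exact_mod_cast Fin.val_ne_of_ne hij
    simp only [← mul_sub, Int.natAbs_mul, Int.natAbs_natCast]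
    exact Nat.le_mul_of_pos_right m (by omega)

theorem Int.sign_add_of_sign_ne_neg {s d : ℤ} (hs : s = 1 ∨ s = -1)
    (hd : d ≠ 0 → d.sign ≠ -s) : (s + d).sign = s := by
  rcases lt_trichotomy d 0 with h | rfl | h
  · rw [Int.sign_eq_neg_one_of_neg h] at hd
    have hs' : s = -1 := by omega
    subst hs'
    exact Int.sign_eq_neg_one_of_neg (by omega)
  · rcases hs with rfl | rfl <;> rfl
  · rw [Int.sign_eq_one_of_pos h] at hd
    have hs' : s = 1 := by omega
    subst hs'
    exact Int.sign_eq_one_of_pos (by omega)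

theorem groupGirth_eq_top_of_forall {G : Type*} [Group G]
    (h : ∀ m : ℕ, ∃ S : Finset G, Subgroup.closure (S : Set G) = ⊤ ∧
      ∀ w, IsRelatorWord (S : Set G) w → m ≤ w.length) :
    groupGirth G = ⊤ := by
  refine ENat.eq_top_iff_forall_ge.2 fun m => ?_
  obtain ⟨S, hS, hw⟩ := h m
  exact le_iSup₂_of_le S hS (le_iInf₂ fun w hw' => by exact_mod_cast hw w hw')

open scoped commutatorElement

namespace PingPong

variable {G X : Type*} [Group G] [MulAction G X] {n m : ℕ} (P : PingPong G X n) (M : Fin n → ℤ)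

def swap : PingPong G X n where
  σ := P.τ
  τ := P.σ
  γ i := (P.γ i)⁻¹
  U := P.V
  V := P.U
  D := P.E
  E := P.D
  x := P.x
  smul_D_subset := P.smul_E_subset
  smul_E_subset := P.smul_D_subset
  U_subset_E := P.V_subset_D
  V_subset_D := P.U_subset_E
  γ_smul_V_subset := P.γ_inv_smul_U_subset
  γ_inv_smul_U_subset i := by simpa using P.γ_smul_V_subset i
  x_mem_D := P.x_mem_E
  x_mem_E := P.x_mem_D

@[simp]
theorem swap_swap : P.swap.swap = P := by
  simp [swap]

theorem commutator_smul_mem_U : ⁅P.σ, P.τ⁆ • P.x ∈ P.U := by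
  have h₁ : P.τ ^ (-1 : ℤ) • P.x ∈ P.V :=
    P.smul_E_subset _ (by norm_num) (Set.smul_mem_smul_set P.x_mem_E)
  have h₂ : P.σ ^ (-1 : ℤ) • P.τ ^ (-1 : ℤ) • P.x ∈ P.U :=
    P.smul_D_subset _ (by norm_num) (Set.smul_mem_smul_set (P.V_subset_D h₁))
  have h₃ : P.τ ^ (1 : ℤ) • P.σ ^ (-1 : ℤ) • P.τ ^ (-1 : ℤ) • P.x ∈ P.V :=
    P.smul_E_subset _ one_ne_zero (Set.smul_mem_smul_set (P.U_subset_E h₂))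
  have h₄ := P.smul_D_subset _ one_ne_zero (Set.smul_mem_smul_set (P.V_subset_D h₃))
  simpa [commutatorElement_def, mul_smul] using h₄

theorem not_commute (hx : P.x ∉ P.U) : ¬ Commute P.σ P.τ := fun h =>
  hx (by simpa [commutatorElement_eq_one_iff_commute.2 h] using P.commutator_smul_mem_U)

def letter (i : Fin n) : G := P.σ ^ M i * P.γ i * P.τ ^ M i

theorem swap_letter (i : Fin n) : P.swap.letter (-M) i = (P.letter M i)⁻¹ := by
  simp [letter, swap, mul_assoc]

open Classical in
noncomputable def generators : Finset G := {P.σ, P.τ} ∪ Finset.univ.image (P.letter M)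

theorem mem_generators {g : G} :
    g ∈ (P.generators M : Set G) ↔ g = P.σ ∨ g = P.τ ∨ ∃ i, P.letter M i = g := by
  simp [generators]

theorem closure_generators (h : Subgroup.closure (Set.range P.γ) = ⊤) :
    Subgroup.closure (P.generators M : Set G) = ⊤ := by
  refine eq_top_iff.2 (h ▸ (Subgroup.closure_le _).2 ?_)
  rintro _ ⟨i, rfl⟩
  have mem {g : G} (hg : g ∈ (P.generators M : Set G)) :
      g ∈ Subgroup.closure (P.generators M : Set G) := Subgroup.subset_closure hg
  have hγ : P.γ i = P.σ ^ (-M i) * P.letter M i * P.τ ^ (-M i) := by simp [letter, mul_assoc]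
  rw [hγ]
  exact mul_mem (mul_mem (zpow_mem (mem (by simp [generators])) _)
    (mem (by simp [generators]))) (zpow_mem (mem (by simp [generators])) _)

theorem swap_mem_generators {g : G}
    (hg : g ∈ (P.generators M : Set G) ∨ g⁻¹ ∈ (P.generators M : Set G)) :
    g ∈ (P.swap.generators (-M) : Set G) ∨ g⁻¹ ∈ (P.swap.generators (-M) : Set G) := by
  simp only [mem_generators, swap_letter] at hg ⊢
  simp only [swap, inv_eq_iff_eq_inv, inv_inv] at hg ⊢
  tauto

/-- `w.prod • x = σ ^ (c + d) • p` with `p ∈ D`, where `σ ^ d` is the leading run of `σ`- or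
`σ⁻¹`-letters of `w` and `c = M j` if that run is followed by `letter M j`, `c = 0` otherwise. -/
def OnSigmaSide (w : List G) : Prop :=
  ∃ c d : ℤ, ∃ p ∈ P.D, w.prod • P.x = P.σ ^ (c + d) • p ∧ d.natAbs ≤ w.length ∧
    (d ≠ 0 → w.head? = some (P.σ ^ d.sign)) ∧
    ((c = 0 ∧ (d = 0 → w = [])) ∨ ∃ j, c = M j ∧ (d = 0 → w.head? = some (P.letter M j)))

variable {P M}

theorem onSigmaSide_nil : P.OnSigmaSide M [] :=
  ⟨0, 0, P.x, P.x_mem_D, by simp, by simp, by simp, Or.inl ⟨rfl, fun _ => rfl⟩⟩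

namespace OnSigmaSide

variable {w : List G} (h : P.OnSigmaSide M w) (hM : IsSeparated m M) (hlen : w.length < m)
include h hM hlen

theorem smul_mem_U (hw : w ≠ []) : w.prod • P.x ∈ P.U := by
  obtain ⟨c, d, p, hp, hwx, hd, -, hc⟩ := h
  have hcd : c + d ≠ 0 := by
    rcases hc with ⟨rfl, hd0⟩ | ⟨j, rfl, -⟩
    · exact fun h0 => hw (hd0 (by simpa using h0))
    · have := hM.1 j
      omega
  exact hwx ▸ P.smul_D_subset _ hcd (Set.smul_mem_smul_set hp)

theorem smul_mem_E : w.prod • P.x ∈ P.E := by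
  rcases eq_or_ne w [] with rfl | hw
  · simpa using P.x_mem_E
  · exact P.U_subset_E (h.smul_mem_U hM hlen hw)

omit hM hlen in
theorem cons_zpow_σ {s : ℤ} (hs : s = 1 ∨ s = -1) (hchain : ∀ b ∈ w.head?, b ≠ (P.σ ^ s)⁻¹) :
    P.OnSigmaSide M (P.σ ^ s :: w) := by
  obtain ⟨c, d, p, hp, hwx, hd, hhead, hc⟩ := h
  have hsign : (s + d).sign = s := by
    refine Int.sign_add_of_sign_ne_neg hs fun hd0 hds => hchain _ (hhead hd0) ?_
    rw [hds, zpow_neg]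
  have hsd : s + d ≠ 0 := fun h0 => by rcases hs with rfl | rfl <;> simp [h0] at hsign
  refine ⟨c, s + d, p, hp, ?_, ?_, fun _ => by rw [hsign]; rfl, ?_⟩
  · rw [List.prod_cons, mul_smul, hwx, smul_smul, ← zpow_add]
    congr 2
    ring
  · have hs1 : s.natAbs = 1 := by rcases hs with rfl | rfl <;> rfl
    calc (s + d).natAbs ≤ s.natAbs + d.natAbs := Int.natAbs_add_le s d
      _ ≤ (P.σ ^ s :: w).length := by simp only [hs1, List.length_cons]; omega
  · rcases hc with ⟨rfl, -⟩ | ⟨j, rfl, -⟩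
    · exact Or.inl ⟨rfl, fun h0 => absurd h0 hsd⟩
    · exact Or.inr ⟨j, rfl, fun h0 => absurd h0 hsd⟩

theorem cons_zpow_τ {s : ℤ} (hs : s = 1 ∨ s = -1) :
    P.swap.OnSigmaSide (-M) (P.τ ^ s :: w) := by
  refine ⟨0, s, w.prod • P.x, h.smul_mem_E hM hlen, by simp [swap, mul_smul], ?_, ?_, ?_⟩
  · simp only [List.length_cons]
    omega
  · rcases hs with rfl | rfl <;> simp [swap]
  · exact Or.inl ⟨rfl, by omega⟩

theorem cons_letter (i : Fin n) : P.OnSigmaSide M (P.letter M i :: w) := by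
  have hMi : M i ≠ 0 := by
    have := hM.1 i
    omega
  refine ⟨M i, 0, P.γ i • P.τ ^ M i • w.prod • P.x, ?_, by simp [letter, mul_smul], by simp,
    by simp, Or.inr ⟨i, rfl, fun _ => rfl⟩⟩
  exact P.γ_smul_V_subset i (Set.smul_mem_smul_set
    (P.smul_E_subset _ hMi (Set.smul_mem_smul_set (h.smul_mem_E hM hlen))))

theorem cons_letter_inv (i : Fin n) (hchain : ∀ b ∈ w.head?, b ≠ P.letter M i) :
    P.swap.OnSigmaSide (-M) ((P.letter M i)⁻¹ :: w) := by
  obtain ⟨c, d, p, hp, hwx, hd, hhead, hc⟩ := h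
  have hne : c + d - M i ≠ 0 := by
    rcases hc with ⟨rfl, -⟩ | ⟨j, rfl, hj⟩
    · have := hM.1 i
      omega
    · rcases eq_or_ne j i with rfl | hji
      · have : d ≠ 0 := fun h0 => hchain _ (hj h0) rfl
        omega
      · have := hM.2 hji
        omega
  refine ⟨-M i, 0, (P.γ i)⁻¹ • P.σ ^ (c + d - M i) • p, ?_, ?_, by simp, by simp,
    Or.inr ⟨i, rfl, fun _ => by simp [swap_letter]⟩⟩
  · exact P.γ_inv_smul_U_subset i (Set.smul_mem_smul_set
      (P.smul_D_subset _ hne (Set.smul_mem_smul_set hp)))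
  · simp only [swap, letter, List.prod_cons, mul_smul, hwx, mul_inv_rev, ← zpow_neg, add_zero]
    rw [smul_smul (P.σ ^ (-M i)), ← zpow_add, neg_add_eq_sub]

theorem cons {ℓ : G} (hℓ : ℓ ∈ (P.generators M : Set G) ∨ ℓ⁻¹ ∈ (P.generators M : Set G))
    (hchain : ∀ b ∈ w.head?, b ≠ ℓ⁻¹) :
    P.OnSigmaSide M (ℓ :: w) ∨ P.swap.OnSigmaSide (-M) (ℓ :: w) := by
  simp only [mem_generators] at hℓ
  rcases hℓ with (rfl | rfl | ⟨i, rfl⟩) | (hσ | hτ | ⟨i, hi⟩)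
  · simpa using Or.inl (h.cons_zpow_σ (Or.inl rfl) (by simpa using hchain))
  · simpa using Or.inr (h.cons_zpow_τ hM hlen (Or.inl rfl))
  · exact Or.inl (h.cons_letter hM hlen i)
  · rw [inv_eq_iff_eq_inv.1 hσ] at hchain ⊢
    simpa using Or.inl (h.cons_zpow_σ (Or.inr rfl) (by simpa using hchain))
  · rw [inv_eq_iff_eq_inv.1 hτ]
    simpa using Or.inr (h.cons_zpow_τ hM hlen (Or.inr rfl))
  · rw [← inv_inv ℓ, ← hi] at hchain ⊢
    exact Or.inr (h.cons_letter_inv hM hlen i (by simpa using hchain))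

end OnSigmaSide

theorem onSigmaSide_or_swap (hM : IsSeparated m M) {w : List G}
    (hw : ∀ ℓ ∈ w, ℓ ∈ (P.generators M : Set G) ∨ ℓ⁻¹ ∈ (P.generators M : Set G))
    (hchain : List.IsChain (fun a b => b ≠ a⁻¹) w) (hlen : w.length ≤ m) :
    P.OnSigmaSide M w ∨ P.swap.OnSigmaSide (-M) w := by
  induction w with
  | nil => exact Or.inl onSigmaSide_nil
  | cons ℓ w ih =>
    obtain ⟨hℓw, hchain⟩ := List.isChain_cons.1 hchain
    have hlen : w.length < m := by simpa using hlen
    rcases ih (fun g hg => hw g (List.mem_cons_of_mem ℓ hg)) hchain hlen.le with h | h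
    · exact h.cons hM hlen (hw ℓ List.mem_cons_self) hℓw
    · have hℓ := P.swap_mem_generators M (hw ℓ List.mem_cons_self)
      simpa [or_comm] using h.cons hM.neg hlen hℓ hℓw

theorem le_length_of_isRelatorWord (hM : IsSeparated m M) (hxU : P.x ∉ P.U) (hxV : P.x ∉ P.V)
    {w : List G} (hw : IsRelatorWord (P.generators M : Set G) w) : m ≤ w.length := by
  obtain ⟨hne, hS, hchain, hprod⟩ := hw
  by_contra! hlen
  rcases onSigmaSide_or_swap hM hS hchain hlen.le with h | h
  · exact hxU (by simpa [hprod] using h.smul_mem_U hM hlen hne)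
  · exact hxV (by simpa [hprod, swap] using h.smul_mem_U hM.neg hlen hne)

end PingPong

/-- **Infinite Girth Criterion.** -/
theorem infinite_girth_criterion {G X : Type*} [Group G] [MulAction G X]
    (n : ℕ) (γ : Fin n → G) (hgen : Subgroup.closure (Set.range γ) = ⊤)
    (σ τ : G) (Uσ Uτ : Set X) (x : X)
    (h1 : x ∉ (Uσ ∪ Uτ) ∪ ⋃ i, (γ i • (Uσ ∪ Uτ) ∪ (γ i)⁻¹ • (Uσ ∪ Uτ)))
    (h2 : ∀ k : ℤ, k ≠ 0 →
      (σ ^ k) • ({x} ∪ Uτ ∪ ⋃ i, (γ i • Uτ ∪ (γ i)⁻¹ • Uτ)) ⊆ Uσ)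
    (h3 : ∀ k : ℤ, k ≠ 0 →
      (τ ^ k) • ({x} ∪ Uσ ∪ ⋃ i, (γ i • Uσ ∪ (γ i)⁻¹ • Uσ)) ⊆ Uτ) :
    ¬ IsCyclic G ∧ groupGirth G = ⊤ := by
  let P : PingPong G X n :=
    { σ, τ, γ, x
      U := Uσ
      V := Uτ
      D := {x} ∪ Uτ ∪ ⋃ i, (γ i • Uτ ∪ (γ i)⁻¹ • Uτ)
      E := {x} ∪ Uσ ∪ ⋃ i, (γ i • Uσ ∪ (γ i)⁻¹ • Uσ)
      smul_D_subset := h2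
      smul_E_subset := h3
      U_subset_E _ hp := by simp [hp]
      V_subset_D _ hp := by simp [hp]
      γ_smul_V_subset i _ hp := Set.mem_union_right _ (Set.mem_iUnion_of_mem i (Or.inl hp))
      γ_inv_smul_U_subset i _ hp := Set.mem_union_right _ (Set.mem_iUnion_of_mem i (Or.inr hp))
      x_mem_D := by simp
      x_mem_E := by simp }
  have hxU : x ∉ Uσ := fun h => h1 (by simp [h])
  have hxV : x ∉ Uτ := fun h => h1 (by simp [h])
  refine ⟨fun hcyc => P.not_commute hxU (hcyc.commGroup.mul_comm σ τ), ?_⟩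
  refine groupGirth_eq_top_of_forall fun m => ?_
  obtain ⟨M, hM⟩ := exists_isSeparated n m
  exact ⟨P.generators M, P.closure_generators M hgen,
    fun w hw => P.le_length_of_isRelatorWord hM hxU hxV hw⟩
end

section
/- If a finitely generated group G contains a finite-index subgroup H that is finitely generated and has finite girth, then G has finite girth. -/
/-!
Fix a finite generating set `S` of `G`, put `A = S ∪ S⁻¹` and let `n` be the index of `H`.
Choosing for every right coset of `H` the shortlex-least word over `A` reaching it gives a
prefix-closed (Schreier) transversal whose words have length `< n`. The nontrivial Schreier
generators `r a r'⁻¹` form a finite generating set `T` of `H`, so `H` has a reduced relator over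
`T` of length at most `N := U(H)`. Spelling out each letter `r a r'⁻¹` as the `A`-word of
length `< 2n` it names gives an `A`-word of product `1` and length `≤ 2nN`. Its free reduction is
nonempty: the Reidemeister–Schreier rewriting commutes with free reduction and, after deleting
trivial letters, recovers the original reduced relator. Hence `U(G, S) ≤ 2nN` for every `S`.
-/
open Pointwise

namespace List

variable {α : Type*} {r : α → α → Prop}

theorem Lex.append_right_mono_of_length_eq :
    ∀ {s₁ s₂ : List α}, s₁.length = s₂.length → Lex r s₁ s₂ →
      ∀ t, Lex r (s₁ ++ t) (s₂ ++ t)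
  | _, _, h, .nil, _ => by simp at h
  | _, _, h, .cons hl, t => .cons (append_right_mono_of_length_eq (by simpa using h) hl t)
  | _, _, _, .rel hab, _ => .rel hab

theorem Shortlex.append_right_mono {s₁ s₂ : List α} (h : Shortlex r s₁ s₂) (t : List α) :
    Shortlex r (s₁ ++ t) (s₂ ++ t) := by
  rcases shortlex_def.mp h with hlen | ⟨hlen, hlex⟩
  · exact .of_length_lt (by simpa using hlen)
  · exact .of_lex (by simp [hlen]) (hlex.append_right_mono_of_length_eq hlen t)

end List

section Girth

variable {G : Type*} [Group G]

theorem girthWith_le_length {S : Set G} {w : List G} (hw : IsRelatorWord S w) :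
    girthWith S ≤ w.length :=
  iInf₂_le w hw

theorem exists_isRelatorWord_of_girthWith_le {S : Set G} {N : ℕ} (h : girthWith S ≤ N) :
    ∃ w, IsRelatorWord S w ∧ w.length ≤ N := by
  have hlt : girthWith S < (N + 1 : ℕ) := h.trans_lt (by exact_mod_cast N.lt_succ_self)
  obtain ⟨w, hw, hwN⟩ := by simpa only [girthWith, iInf_lt_iff] using hlt
  exact ⟨w, hw, Nat.lt_succ_iff.mp (by exact_mod_cast hwN)⟩

theorem girthWith_le_groupGirth {S : Finset G} (hS : Subgroup.closure (S : Set G) = ⊤) :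
    girthWith (S : Set G) ≤ groupGirth G :=
  le_iSup₂ (f := fun (S : Finset G) _ => girthWith (S : Set G)) S hS

theorem IsRelatorWord.map {K : Type*} [Group K] {f : K →* G} (hf : Function.Injective f)
    {T : Set K} {w : List K} (hw : IsRelatorWord T w) : IsRelatorWord (f '' T) (w.map f) := by
  obtain ⟨hne, hT, hred, hprod⟩ := hw
  refine ⟨by simpa using hne, ?_, ?_, by rw [← map_list_prod, hprod, map_one]⟩
  · simp only [List.mem_map, forall_exists_index, and_imp, forall_apply_eq_imp_iff₂]
    intro g hg
    rcases hT g hg with h | h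
    · exact .inl ⟨g, h, rfl⟩
    · exact .inr ⟨g⁻¹, h, map_inv f g⟩
  · refine (List.isChain_map f).mpr (hred.imp fun a b hab h => hab (hf ?_))
    rw [h, map_inv]

end Girth

namespace GroupWord

variable {G : Type*} [Group G]

def inv (w : List G) : List G := (w.map (·⁻¹)).reverse

@[simp] theorem inv_nil : inv ([] : List G) = [] := rfl

theorem inv_cons (a : G) (w : List G) : inv (a :: w) = inv w ++ [a⁻¹] := by simp [inv]

@[simp] theorem length_inv (w : List G) : (inv w).length = w.length := by simp [inv]

@[simp] theorem prod_inv (w : List G) : (inv w).prod = w.prod⁻¹ := (w.prod_inv_reverse).symm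

@[simp] theorem mem_inv {w : List G} {x : G} : x ∈ inv w ↔ x⁻¹ ∈ w := by simp [inv]

def IsReduced (w : List G) : Prop := w.IsChain fun a b => b ≠ a⁻¹

def CancelStep (w w' : List G) : Prop :=
  ∃ X Z : List G, ∃ a : G, w = X ++ a :: a⁻¹ :: Z ∧ w' = X ++ Z

abbrev Reduces : List G → List G → Prop := Relation.ReflTransGen CancelStep

theorem CancelStep.prod_eq {w w' : List G} (h : CancelStep w w') : w'.prod = w.prod := by
  obtain ⟨X, Z, a, rfl, rfl⟩ := h
  simp

theorem Reduces.prod_eq {w w' : List G} (h : Reduces w w') : w'.prod = w.prod := by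
  induction h with
  | refl => rfl
  | tail _ hstep ih => exact hstep.prod_eq.trans ih

theorem CancelStep.subset {w w' : List G} (h : CancelStep w w') : w' ⊆ w := by
  obtain ⟨X, Z, a, rfl, rfl⟩ := h
  intro x
  simp only [List.mem_append, List.mem_cons]
  tauto

theorem Reduces.subset {w w' : List G} (h : Reduces w w') : w' ⊆ w := by
  induction h with
  | refl => exact List.Subset.refl _
  | tail _ hstep ih => exact fun x hx => ih (hstep.subset hx)

theorem CancelStep.length_lt {w w' : List G} (h : CancelStep w w') : w'.length < w.length := by
  obtain ⟨X, Z, a, rfl, rfl⟩ := h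
  simp

theorem Reduces.length_le {w w' : List G} (h : Reduces w w') : w'.length ≤ w.length := by
  induction h with
  | refl => rfl
  | tail _ hstep ih => exact hstep.length_lt.le.trans ih

theorem IsReduced.not_cancelStep {w w' : List G} (hw : IsReduced w) : ¬ CancelStep w w' := by
  rintro ⟨X, Z, a, rfl, -⟩
  exact (List.isChain_cons_cons.mp (List.isChain_append.mp hw).2.1).1 rfl

theorem IsReduced.eq_nil_of_reduces_nil {w : List G} (hw : IsReduced w) (h : Reduces w []) :
    w = [] := by
  rcases h.cases_head with rfl | ⟨w', hstep, -⟩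
  · rfl
  · exact (hw.not_cancelStep hstep).elim

theorem exists_cancelStep_of_not_isReduced :
    ∀ {w : List G}, ¬ IsReduced w → ∃ w', CancelStep w w'
  | [], h => absurd List.isChain_nil h
  | [a], h => absurd (List.isChain_singleton a) h
  | a :: b :: w, h => by
    by_cases hab : b = a⁻¹
    · exact ⟨w, [], w, a, by rw [hab]; rfl, rfl⟩
    · obtain ⟨-, X, Z, c, hw, rfl⟩ := exists_cancelStep_of_not_isReduced (w := b :: w)
        fun hc => h (List.isChain_cons_cons.mpr ⟨hab, hc⟩)
      exact ⟨a :: (X ++ Z), a :: X, Z, c, by rw [hw]; rfl, rfl⟩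

theorem exists_reduces_isReduced (w : List G) : ∃ v, Reduces w v ∧ IsReduced v := by
  induction hn : w.length using Nat.strong_induction_on generalizing w with
  | _ n ih =>
    by_cases hw : IsReduced w
    · exact ⟨w, .refl, hw⟩
    · obtain ⟨w', hstep⟩ := exists_cancelStep_of_not_isReduced hw
      obtain ⟨v, hv, hred⟩ := ih _ (hn ▸ hstep.length_lt) w' rfl
      exact ⟨v, .head hstep hv, hred⟩

theorem CancelStep.filter_ne_one [DecidableEq G] {w w' : List G} (h : CancelStep w w') :
    Reduces (w.filter (· != 1)) (w'.filter (· != 1)) := by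
  obtain ⟨X, Z, a, rfl, rfl⟩ := h
  by_cases ha : a = 1
  · subst ha
    simpa using Relation.ReflTransGen.refl
  · exact .single ⟨X.filter (· != 1), Z.filter (· != 1), a, by simp [ha], by simp⟩

theorem Reduces.filter_ne_one [DecidableEq G] {w w' : List G} (h : Reduces w w') :
    Reduces (w.filter (· != 1)) (w'.filter (· != 1)) := by
  induction h with
  | refl => exact .refl
  | tail _ hstep ih => exact ih.trans hstep.filter_ne_one

end GroupWord

open GroupWord

section SchreierRewrite

variable {G : Type*} [Group G] (R : G → G)

/-- The Reidemeister–Schreier rewriting, relative to the coset representative function `R`, of a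
word read from the point `c`. -/
def schreierRewrite : G → List G → List G
  | _, [] => []
  | c, a :: w => (R c * a * (R (c * a))⁻¹) :: schreierRewrite (c * a) w

@[simp] theorem schreierRewrite_nil (c : G) : schreierRewrite R c [] = [] := rfl

theorem schreierRewrite_cons (c a : G) (w : List G) :
    schreierRewrite R c (a :: w) = (R c * a * (R (c * a))⁻¹) :: schreierRewrite R (c * a) w :=
  rfl

theorem schreierRewrite_append (c : G) (w₁ w₂ : List G) :
    schreierRewrite R c (w₁ ++ w₂) =
      schreierRewrite R c w₁ ++ schreierRewrite R (c * w₁.prod) w₂ := by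
  induction w₁ generalizing c with
  | nil => simp
  | cons a w ih => simp [schreierRewrite_cons, ih, mul_assoc]

theorem prod_schreierRewrite (c : G) (w : List G) :
    (schreierRewrite R c w).prod = R c * w.prod * (R (c * w.prod))⁻¹ := by
  induction w generalizing c with
  | nil => simp
  | cons a w ih => simp [schreierRewrite_cons, ih, mul_assoc]

theorem exists_of_mem_schreierRewrite {c x : G} {w : List G} (hx : x ∈ schreierRewrite R c w) :
    ∃ d, ∃ a ∈ w, R d * a * (R (d * a))⁻¹ = x := by
  induction w generalizing c with
  | nil => simp at hx
  | cons a w ih =>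
    rcases List.mem_cons.mp hx with rfl | hx
    · exact ⟨c, a, List.mem_cons_self, rfl⟩
    · obtain ⟨d, b, hb, rfl⟩ := ih hx
      exact ⟨d, b, List.mem_cons_of_mem _ hb, rfl⟩

theorem GroupWord.CancelStep.schreierRewrite {w w' : List G} (h : CancelStep w w') (c : G) :
    CancelStep (schreierRewrite R c w) (schreierRewrite R c w') := by
  obtain ⟨X, Z, a, rfl, rfl⟩ := h
  refine ⟨_root_.schreierRewrite R c X, _root_.schreierRewrite R (c * X.prod) Z,
    R (c * X.prod) * a * (R (c * X.prod * a))⁻¹, ?_, by rw [schreierRewrite_append]⟩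
  simp [schreierRewrite_append, schreierRewrite_cons, mul_assoc]

theorem GroupWord.Reduces.schreierRewrite {w w' : List G} (h : Reduces w w') (c : G) :
    Reduces (schreierRewrite R c w) (schreierRewrite R c w') := by
  induction h with
  | refl => exact .refl
  | tail _ hstep ih => exact ih.tail (hstep.schreierRewrite R c)

theorem schreierRewrite_inv (c : G) (w : List G) :
    schreierRewrite R c (inv w) = inv (schreierRewrite R (c * w.prod⁻¹) w) := by
  induction w generalizing c with
  | nil => simp
  | cons a w ih =>
    simp [inv_cons, schreierRewrite_append, schreierRewrite_cons, ih, mul_assoc]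

theorem schreierRewrite_congr {c d : G} (h : ∀ x, R (c * x) = R (d * x)) (w : List G) :
    schreierRewrite R c w = schreierRewrite R d w := by
  induction w generalizing c d with
  | nil => rfl
  | cons a w ih =>
    rw [schreierRewrite_cons, schreierRewrite_cons,
      ih (c := c * a) (d := d * a) fun x => by simpa only [mul_assoc] using h (a * x)]
    simpa using congrArg₂ (fun r s => r * a * s⁻¹) (h 1) (h a)

theorem eq_one_of_mem_schreierRewrite {c : G} {w : List G}
    (h : ∀ p v, w = p ++ v → R (c * p.prod) = c * p.prod) :
    ∀ x ∈ schreierRewrite R c w, x = 1 := by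
  induction w generalizing c with
  | nil => simp
  | cons a w ih =>
    have hc : R c = c := by simpa using h [] (a :: w) rfl
    have hca : R (c * a) = c * a := by simpa using h [a] w rfl
    rintro x (_ | ⟨_, hx⟩)
    · simp [hc, hca]
    · exact ih (fun p v hw => by simpa [mul_assoc] using h (a :: p) v (by rw [hw]; rfl)) x hx

end SchreierRewrite

section CosetWord

variable {G : Type*} [Group G] (H : Subgroup G) (A : Set G)

/-- `w` is a word over `A` ending in the right coset `H * g`. -/
def IsCosetWord (g : G) (w : List G) : Prop := (∀ a ∈ w, a ∈ A) ∧ g * w.prod⁻¹ ∈ H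

/-- The shortlex-least word over `A` (for an arbitrary well-order on `G`) ending in `H * g`.
Shortlex minimality is what makes these words closed under taking prefixes. -/
noncomputable def cosetWord (g : G) : List G :=
  open Classical in
  if h : ∃ w, IsCosetWord H A g w then
    (List.Shortlex.wf WellOrderingRel.isWellOrder.wf).min {w | IsCosetWord H A g w} h
  else []

noncomputable def cosetRep (g : G) : G := (cosetWord H A g).prod

noncomputable def schreierGen (c a : G) : G := cosetRep H A c * a * (cosetRep H A (c * a))⁻¹

def schreierGens : Set G := Set.image2 (schreierGen H A) Set.univ A

variable {H A}

theorem isCosetWord_congr {g₁ g₂ : G} (h : g₁ * g₂⁻¹ ∈ H) (w : List G) :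
    IsCosetWord H A g₁ w ↔ IsCosetWord H A g₂ w := by
  refine and_congr_right fun _ => ?_
  rw [← H.mul_mem_cancel_left (H.inv_mem h)]
  group

theorem exists_isCosetWord (hA : Submonoid.closure A = ⊤) (g : G) :
    ∃ w, IsCosetWord H A g w := by
  obtain ⟨w, hwA, hw⟩ := Submonoid.exists_list_of_mem_closure (hA ▸ Submonoid.mem_top g)
  exact ⟨w, hwA, by simp [hw]⟩

theorem isCosetWord_cosetWord (hA : Submonoid.closure A = ⊤) (g : G) :
    IsCosetWord H A g (cosetWord H A g) := by
  rw [cosetWord, dif_pos (exists_isCosetWord hA g)]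
  exact WellFounded.min_mem (List.Shortlex.wf WellOrderingRel.isWellOrder.wf)
    {w | IsCosetWord H A g w} _

theorem not_shortlex_cosetWord {g : G} {w : List G} (hw : IsCosetWord H A g w) :
    ¬ List.Shortlex WellOrderingRel w (cosetWord H A g) := by
  rw [cosetWord, dif_pos ⟨w, hw⟩]
  exact WellFounded.not_lt_min (List.Shortlex.wf WellOrderingRel.isWellOrder.wf)
    {w | IsCosetWord H A g w} hw

theorem cosetWord_congr {g₁ g₂ : G} (h : g₁ * g₂⁻¹ ∈ H) :
    cosetWord H A g₁ = cosetWord H A g₂ := by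
  have : IsCosetWord H A g₁ = IsCosetWord H A g₂ :=
    funext fun w => propext (isCosetWord_congr h w)
  unfold cosetWord
  rw [this]

theorem cosetWord_prod_of_eq_append (hA : Submonoid.closure A = ⊤) {g : G} {p v : List G}
    (h : cosetWord H A g = p ++ v) : cosetWord H A p.prod = p := by
  obtain ⟨hgA, hg⟩ := isCosetWord_cosetWord hA g
  rw [h] at hgA hg
  have hp : IsCosetWord H A p.prod p := ⟨fun a ha => hgA a (List.mem_append_left _ ha), by simp⟩
  obtain ⟨hp'A, hp'⟩ := isCosetWord_cosetWord (H := H) hA p.prod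
  rcases trichotomous_of (List.Shortlex WellOrderingRel) (cosetWord H A p.prod) p with
    hlt | heq | hgt
  · -- replacing the prefix `p` by a shortlex-smaller word would beat `cosetWord H A g`
    refine absurd (h ▸ hlt.append_right_mono v) (not_shortlex_cosetWord ⟨?_, ?_⟩)
    · simp only [List.mem_append]
      rintro a (ha | ha)
      exacts [hp'A a ha, hgA a (List.mem_append_right _ ha)]
    · convert H.mul_mem hg hp' using 1
      simp [mul_assoc]
  · exact heq
  · exact absurd hgt (not_shortlex_cosetWord hp)

theorem cosetWord_one (hA : Submonoid.closure A = ⊤) : cosetWord H A 1 = [] := by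
  simpa using cosetWord_prod_of_eq_append (g := 1) (p := []) hA (List.nil_append _).symm

/-- Pigeonhole on the right cosets `H * (w.take i).prod`, encoded as the left cosets of their
inverses. -/
theorem exists_lt_take_mul_inv_mem (H : Subgroup G) [H.FiniteIndex] {w : List G}
    (hw : H.index ≤ w.length) :
    ∃ i j, i < j ∧ j ≤ w.length ∧ (w.take i).prod * (w.take j).prod⁻¹ ∈ H := by
  have hf : ¬ Function.Injective fun i : Fin (w.length + 1) =>
      (QuotientGroup.mk (w.take i).prod⁻¹ : G ⧸ H) := fun hinj => by
    have := Nat.card_le_card_of_injective _ hinj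
    rw [Nat.card_eq_fintype_card, Fintype.card_fin] at this
    change _ ≤ H.index at this
    omega
  simp only [Function.Injective, not_forall, QuotientGroup.eq, inv_inv] at hf
  obtain ⟨i, j, hij, hne⟩ := hf
  rcases lt_or_gt_of_ne (Fin.val_ne_of_ne hne) with hlt | hlt
  · exact ⟨i, j, hlt, Nat.lt_succ_iff.mp j.2, hij⟩
  · exact ⟨j, i, hlt, Nat.lt_succ_iff.mp i.2, by simpa using H.inv_mem hij⟩

theorem length_cosetWord_lt_index (hA : Submonoid.closure A = ⊤) [H.FiniteIndex] (g : G) :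
    (cosetWord H A g).length < H.index := by
  obtain ⟨hwA, hw⟩ := isCosetWord_cosetWord hA g
  set w := cosetWord H A g with hw_def
  by_contra! hlen
  obtain ⟨i, j, hij, hj, hH⟩ := exists_lt_take_mul_inv_mem H hlen
  -- cut out the loop of `w` between positions `i` and `j`
  have hcut : IsCosetWord H A g (w.take i ++ w.drop j) := by
    refine ⟨?_, ?_⟩
    · simp only [List.mem_append]
      rintro a (ha | ha)
      exacts [hwA a (List.mem_of_mem_take ha), hwA a (List.mem_of_mem_drop ha)]
    · convert H.mul_mem hw (H.inv_mem hH) using 1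
      rw [List.prod_append, ← List.prod_take_mul_prod_drop w j]
      group
  refine not_shortlex_cosetWord hcut (.of_length_lt ?_)
  simp only [← hw_def, List.length_append, List.length_take, List.length_drop]
  omega

theorem mul_inv_cosetRep_mem (hA : Submonoid.closure A = ⊤) (g : G) :
    g * (cosetRep H A g)⁻¹ ∈ H :=
  (isCosetWord_cosetWord hA g).2

theorem cosetRep_congr {g₁ g₂ : G} (h : g₁ * g₂⁻¹ ∈ H) :
    cosetRep H A g₁ = cosetRep H A g₂ := by
  rw [cosetRep, cosetWord_congr h, cosetRep]

theorem cosetRep_cosetRep (hA : Submonoid.closure A = ⊤) (g : G) :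
    cosetRep H A (cosetRep H A g) = cosetRep H A g :=
  cosetRep_congr (by simpa using H.inv_mem (mul_inv_cosetRep_mem hA g))

theorem cosetRep_cosetRep_mul (hA : Submonoid.closure A = ⊤) (g a : G) :
    cosetRep H A (cosetRep H A g * a) = cosetRep H A (g * a) :=
  cosetRep_congr (by simpa [mul_assoc] using H.inv_mem (mul_inv_cosetRep_mem hA g))

theorem cosetRep_of_mem (hA : Submonoid.closure A = ⊤) {h : G} (hh : h ∈ H) :
    cosetRep H A h = 1 := by
  rw [cosetRep_congr (g₂ := 1) (by simpa using hh), cosetRep, cosetWord_one hA, List.prod_nil]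

theorem cosetRep_prod_of_eq_append (hA : Submonoid.closure A = ⊤) {g : G} {p v : List G}
    (h : cosetWord H A g = p ++ v) : cosetRep H A p.prod = p.prod := by
  rw [cosetRep, cosetWord_prod_of_eq_append hA h]

theorem finite_range_cosetRep [H.FiniteIndex] : (Set.range (cosetRep H A)).Finite := by
  refine (Set.finite_range fun q : G ⧸ H => cosetRep H A q.out⁻¹).subset ?_
  rintro _ ⟨g, rfl⟩
  obtain ⟨h, hh⟩ := QuotientGroup.mk_out_eq_mul H g⁻¹
  exact ⟨QuotientGroup.mk g⁻¹, cosetRep_congr (by simp [hh])⟩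

theorem schreierGen_mem (hA : Submonoid.closure A = ⊤) (c a : G) :
    schreierGen H A c a ∈ H := by
  convert H.mul_mem (H.inv_mem (mul_inv_cosetRep_mem hA c)) (mul_inv_cosetRep_mem hA (c * a))
    using 1
  simp [schreierGen, mul_assoc]

theorem schreierGen_inv (c a : G) :
    (schreierGen H A c a)⁻¹ = schreierGen H A (c * a) a⁻¹ := by
  simp [schreierGen, mul_assoc]

theorem inv_mem_schreierGens (hAinv : A⁻¹ ⊆ A) {y : G} (hy : y ∈ schreierGens H A) :
    y⁻¹ ∈ schreierGens H A := by
  obtain ⟨c, -, a, ha, rfl⟩ := hy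
  exact ⟨c * a, trivial, a⁻¹, hAinv (by simpa using ha), (schreierGen_inv c a).symm⟩

theorem schreierGens_subset (hA : Submonoid.closure A = ⊤) : schreierGens H A ⊆ H := by
  rintro _ ⟨c, -, a, -, rfl⟩
  exact schreierGen_mem hA c a

theorem finite_schreierGens (hA : Submonoid.closure A = ⊤) (hAfin : A.Finite)
    [H.FiniteIndex] : (schreierGens H A).Finite := by
  refine ((finite_range_cosetRep (H := H) (A := A)).image2 (schreierGen H A) hAfin).subset ?_
  rintro _ ⟨c, -, a, ha, rfl⟩
  refine ⟨cosetRep H A c, ⟨c, rfl⟩, a, ha, ?_⟩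
  simp only [schreierGen, cosetRep_cosetRep hA, cosetRep_cosetRep_mul hA]

end CosetWord

section SchreierGenerators

variable {G : Type*} [Group G] {H : Subgroup G} {A : Set G}

theorem schreierRewrite_cosetRep_of_mem {c : G} (hc : c ∈ H) (w : List G) :
    schreierRewrite (cosetRep H A) c w = schreierRewrite (cosetRep H A) 1 w :=
  schreierRewrite_congr _ (fun x => cosetRep_congr (by simpa using hc)) w

theorem eq_one_of_mem_schreierRewrite_cosetWord (hA : Submonoid.closure A = ⊤) (g : G) :
    ∀ x ∈ schreierRewrite (cosetRep H A) 1 (cosetWord H A g), x = 1 :=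
  eq_one_of_mem_schreierRewrite _ fun _ _ h => by
    rw [one_mul]
    exact cosetRep_prod_of_eq_append hA h

theorem prod_schreierRewrite_cosetRep_of_mem (hA : Submonoid.closure A = ⊤) {w : List G}
    (hw : w.prod ∈ H) : (schreierRewrite (cosetRep H A) 1 w).prod = w.prod := by
  rw [prod_schreierRewrite, one_mul, cosetRep_of_mem hA H.one_mem, cosetRep_of_mem hA hw]
  group

theorem mem_schreierGens_of_mem_schreierRewrite {w : List G} (hw : ∀ a ∈ w, a ∈ A) {c x : G}
    (hx : x ∈ schreierRewrite (cosetRep H A) c w) : x ∈ schreierGens H A := by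
  obtain ⟨d, a, ha, rfl⟩ := exists_of_mem_schreierRewrite _ hx
  exact ⟨d, trivial, a, hw a ha, rfl⟩

theorem closure_preimage_schreierGens_diff_one (hA : Submonoid.closure A = ⊤) :
    Subgroup.closure (((↑) : H → G) ⁻¹' (schreierGens H A \ {1})) = ⊤ := by
  classical
  refine eq_top_iff.mpr fun x _ => ?_
  obtain ⟨u, huA, hu⟩ := Submonoid.exists_list_of_mem_closure (hA ▸ Submonoid.mem_top (x : G))
  have hx : (x : G) ∈
      (Subgroup.closure (((↑) : H → G) ⁻¹' (schreierGens H A \ {1}))).map H.subtype := by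
    rw [MonoidHom.map_closure, H.coe_subtype, Set.image_preimage_eq_of_subset
      fun y hy => ⟨⟨y, schreierGens_subset hA hy.1⟩, rfl⟩, ← hu,
      ← prod_schreierRewrite_cosetRep_of_mem hA (hu ▸ x.2), ← List.prod_filter_bne_one]
    refine Subgroup.list_prod_mem _ fun y hy => Subgroup.subset_closure ?_
    rw [List.mem_filter] at hy
    exact ⟨mem_schreierGens_of_mem_schreierRewrite huA hy.1, by simpa using hy.2⟩
  obtain ⟨t, ht, htx⟩ := Subgroup.mem_map.mp hx
  rwa [← Subtype.ext htx]

/-- The witness is `cosetWord c ++ a :: inv (cosetWord (c * a))`. -/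
theorem exists_word_schreierGen [DecidableEq G] (hA : Submonoid.closure A = ⊤)
    (hAinv : A⁻¹ ⊆ A) [H.FiniteIndex] {c a : G} (ha : a ∈ A) (hy : schreierGen H A c a ≠ 1) :
    ∃ u : List G, (∀ x ∈ u, x ∈ A) ∧ u.length ≤ 2 * H.index ∧
      u.prod = schreierGen H A c a ∧
      (schreierRewrite (cosetRep H A) 1 u).filter (· != 1) = [schreierGen H A c a] := by
  refine ⟨cosetWord H A c ++ a :: inv (cosetWord H A (c * a)), ?_, ?_, ?_, ?_⟩
  · simp only [List.mem_append, List.mem_cons, mem_inv]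
    rintro x (hx | rfl | hx)
    · exact (isCosetWord_cosetWord hA c).1 x hx
    · exact ha
    · exact hAinv ((isCosetWord_cosetWord hA (c * a)).1 _ hx)
  · have := length_cosetWord_lt_index (H := H) hA c
    have := length_cosetWord_lt_index (H := H) hA (c * a)
    simp only [List.length_append, List.length_cons, length_inv]
    omega
  · simp [schreierGen, cosetRep, mul_assoc]
  · have h₁ : (cosetWord H A c).prod = cosetRep H A c := rfl
    have h₂ : cosetRep H A c * a * (cosetWord H A (c * a)).prod⁻¹ = schreierGen H A c a := rfl
    have h₃ : cosetRep H A c * a * (cosetRep H A (c * a))⁻¹ = schreierGen H A c a := rfl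
    rw [schreierRewrite_append, one_mul, h₁, schreierRewrite_cons, cosetRep_cosetRep hA,
      cosetRep_cosetRep_mul hA, h₃, schreierRewrite_inv, h₂,
      schreierRewrite_cosetRep_of_mem (schreierGen_mem hA c a),
      List.filter_append, List.filter_cons_of_pos (by simpa using hy)]
    have hW₁ := eq_one_of_mem_schreierRewrite_cosetWord (H := H) hA c
    have hW₂ := eq_one_of_mem_schreierRewrite_cosetWord (H := H) hA (c * a)
    rw [List.filter_eq_nil_iff.mpr (by simpa using hW₁),
      List.filter_eq_nil_iff.mpr fun x hx => by simpa using hW₂ _ (mem_inv.mp hx)]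
    rfl

theorem exists_word_of_forall_mem_schreierGens [DecidableEq G] (hA : Submonoid.closure A = ⊤)
    (hAinv : A⁻¹ ⊆ A) [H.FiniteIndex] :
    ∀ w : List G, (∀ y ∈ w, y ∈ schreierGens H A ∧ y ≠ 1) →
      ∃ u : List G, (∀ x ∈ u, x ∈ A) ∧ u.length ≤ 2 * H.index * w.length ∧ u.prod = w.prod ∧
        (schreierRewrite (cosetRep H A) 1 u).filter (· != 1) = w
  | [], _ => ⟨[], by simp⟩
  | y :: w, hw => by
    obtain ⟨⟨c, -, a, ha, rfl⟩, hy⟩ := hw _ List.mem_cons_self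
    obtain ⟨u₁, hu₁A, hu₁len, hu₁prod, hu₁⟩ := exists_word_schreierGen hA hAinv ha hy
    obtain ⟨u, huA, hulen, huprod, hu⟩ := exists_word_of_forall_mem_schreierGens hA hAinv w
      fun z hz => hw z (List.mem_cons_of_mem _ hz)
    refine ⟨u₁ ++ u, ?_, ?_, by simp [hu₁prod, huprod], ?_⟩
    · simp only [List.mem_append]
      rintro x (hx | hx)
      exacts [hu₁A x hx, huA x hx]
    · rw [List.length_append, List.length_cons, mul_add, mul_one]
      omega
    · rw [schreierRewrite_append, one_mul, hu₁prod,
        schreierRewrite_cosetRep_of_mem (schreierGen_mem hA c a),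
        List.filter_append, hu₁, hu]
      rfl

theorem exists_isRelatorWord_of_schreierGens (hA : Submonoid.closure A = ⊤) (hAinv : A⁻¹ ⊆ A)
    [H.FiniteIndex] {w : List G} (hw : IsRelatorWord (schreierGens H A \ {1}) w) :
    ∃ v, IsRelatorWord A v ∧ v.length ≤ 2 * H.index * w.length := by
  classical
  obtain ⟨hne, hletters, hred, hprod⟩ := hw
  have hgens : ∀ y ∈ w, y ∈ schreierGens H A ∧ y ≠ 1 := fun y hy => by
    rcases hletters y hy with h | ⟨h, h1⟩
    · exact h
    · exact ⟨by simpa using inv_mem_schreierGens hAinv h, by simpa using h1⟩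
  obtain ⟨u, huA, hulen, huprod, hu⟩ := exists_word_of_forall_mem_schreierGens hA hAinv w hgens
  obtain ⟨v, huv, hv⟩ := exists_reduces_isReduced u
  refine ⟨v, ⟨?_, fun x hx => .inl (huA x (huv.subset hx)), hv, by rw [huv.prod_eq, huprod, hprod]⟩,
    huv.length_le.trans hulen⟩
  rintro rfl
  have hw : Reduces w [] := by
    simpa [hu] using (huv.schreierRewrite (cosetRep H A) 1).filter_ne_one
  exact hne (IsReduced.eq_nil_of_reduces_nil hred hw)

end SchreierGenerators

theorem IsRelatorWord.of_subset {G : Type*} [Group G] {S T : Set G} (hT : T ⊆ S ∪ S⁻¹)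
    {w : List G} (hw : IsRelatorWord T w) : IsRelatorWord S w := by
  obtain ⟨hne, hletters, hred, hprod⟩ := hw
  refine ⟨hne, fun g hg => ?_, hred, hprod⟩
  rcases hletters g hg with h | h
  · exact hT h
  · simpa [or_comm] using hT h

theorem girthWith_le_of_groupGirth_le {G : Type*} [Group G] (H : Subgroup G) [H.FiniteIndex]
    {S : Finset G} (hS : Subgroup.closure (S : Set G) = ⊤) {N : ℕ} (hN : groupGirth H ≤ N) :
    girthWith (S : Set G) ≤ (2 * H.index * N : ℕ) := by
  set A := (S : Set G) ∪ (S : Set G)⁻¹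
  have hA : Submonoid.closure A = ⊤ := by
    rw [← Subgroup.closure_toSubmonoid, hS, Subgroup.top_toSubmonoid]
  have hAinv : A⁻¹ ⊆ A := by simp [A, Set.union_comm]
  have hT := ((finite_schreierGens (H := H) hA (S.finite_toSet.union S.finite_toSet.inv)).sdiff
    (t := {1})).preimage (f := ((↑) : H → G)) Subtype.val_injective.injOn
  obtain ⟨w, hw, hwN⟩ := exists_isRelatorWord_of_girthWith_le
    ((girthWith_le_groupGirth (S := hT.toFinset)
      (by simpa using closure_preimage_schreierGens_diff_one hA)).trans hN)
  obtain ⟨v, hv, hvlen⟩ := exists_isRelatorWord_of_schreierGens hA hAinv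
    ((hw.map H.subtype_injective).of_subset (by
      rw [Set.Finite.coe_toFinset]
      exact (Set.image_preimage_subset _ _).trans Set.subset_union_left))
  calc girthWith (S : Set G) ≤ v.length := girthWith_le_length (hv.of_subset le_rfl)
    _ ≤ (2 * H.index * N : ℕ) := by
      rw [List.length_map] at hvlen
      exact_mod_cast hvlen.trans (Nat.mul_le_mul_left _ hwN)

theorem finite_girth_of_finite_index_subgroup_general {G : Type*} [Group G]
    (H : Subgroup G) [H.FiniteIndex]
    (hH : groupGirth H < ⊤) :
    groupGirth G < ⊤ := by
  obtain ⟨N, hN⟩ := ENat.ne_top_iff_exists.mp hH.ne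
  exact (iSup₂_le fun S hS => girthWith_le_of_groupGirth_le H hS hN.ge).trans_lt
    (ENat.natCast_lt_top _)

/-- A finitely generated group containing a finitely generated finite-index subgroup with
finite girth has finite girth. -/
theorem finite_girth_of_finite_index_subgroup {G : Type*} [Group G] [Group.FG G]
    (H : Subgroup G) [H.FiniteIndex] [Group.FG H]
    (hH : groupGirth H < ⊤) :
    groupGirth G < ⊤ :=
  finite_girth_of_finite_index_subgroup_general H hH
end

section
/- North–south dynamics criterion for infinite girth: Let G be a group acting on a set X, generated by a finite set {γ₁, …, γₙ}. Suppose there exist σ, τ ∈ G and subsets U_σ, U_τ ⊆ X such that: (1) σ^k(X \ U_σ) ⊆ U_σ and τ^k(X \ U_τ) ⊆ U_τ for every nonzero integer k; (2) U_σ ∩ U_τ = ∅; (3) γⱼ^ε(U_τ) ∩ U_σ = ∅ and γⱼ^ε(U_σ) ∩ U_τ = ∅ for every 1 ≤ j ≤ n and ε = ±1; and (4) the set X \ ((U_σ ∪ U_τ) ∪ ⋃_{ε=±1} ⋃_{j=1}^{n} γⱼ^ε(U_σ ∪ U_τ)) is nonempty. Then G is not a cyclic group and G has infinite girth. -/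
open Pointwise

/-!
Fix `M` and conjugate the generators to `g j = σ ^ a j * γ j * τ ^ a j` with `a j = M (j + 1)`;
together with `σ` and `τ` they still generate `G`. Play ping-pong with a point `p` outside
`Uσ ∪ Uτ`: after each letter of a reduced word of length `< M`, the image of `p` is
`σ ^ s • q` with `q ∉ Uσ` or `τ ^ t • q` with `q ∉ Uτ`, and the exponent is never `0`, because
it is either a run of fewer than `M` letters `σ ^ ±1` (resp. `τ ^ ±1`) on top of a multiple of
`M`, or exactly `a j` (resp. `-a j`) right after the letter `g j` (resp. `g j⁻¹`); a following
letter `g k⁻¹` contributes `σ ^ (-a k)`, which cancels `a j` only for `k = j`, excluded by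
reducedness. So such a word moves `p` into `Uσ ∪ Uτ` and is not a relator, and the girth for
these generators is at least `M`. Finally `σ • τ • p ∈ Uσ` and `τ • σ • p ∈ Uτ`, so `σ` and `τ` do not commute.
-/

section PingPong

variable {G X : Type*} [Group G] [MulAction G X] {n : ℕ}

structure NorthSouth (σ τ : G) (Uσ Uτ : Set X) (γ : Fin n → G) : Prop where
  attracts_left : ∀ k : ℤ, k ≠ 0 → ∀ x ∉ Uσ, σ ^ k • x ∈ Uσ
  attracts_right : ∀ k : ℤ, k ≠ 0 → ∀ x ∉ Uτ, τ ^ k • x ∈ Uτ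
  disjoint : Disjoint Uσ Uτ
  smul_notMem_left : ∀ j, ∀ x ∈ Uτ, γ j • x ∉ Uσ
  inv_smul_notMem_right : ∀ j, ∀ x ∈ Uσ, (γ j)⁻¹ • x ∉ Uτ

section SideState

/-- The state of `y = w • p` for a reduced word `w` of length `L` with first letter `h`:
`y = σ ^ s • q` with `q ∉ U`, where the leading `σ`-syllable `s` is either a run of `r` letters
`σ ^ δ` on top of a multiple of `M`, or the exponent `a j` of a first letter `g j = σ ^ a j * ⋯`. -/
def SideState (σ : G) (U : Set X) (g : Fin n → G) (a : Fin n → ℤ) (M L : ℕ) (h : G) (y : X) :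
    Prop :=
  ∃ s : ℤ, ∃ q ∉ U, y = σ ^ s • q ∧
    ((∃ δ : ℤˣ, h = σ ^ (δ : ℤ) ∧ ∃ (i : ℤ) (r : ℕ), 0 < r ∧ r ≤ L ∧ s = M * i + δ * r) ∨
      ∃ j, h = g j ∧ s = a j)

variable {σ : G} {U : Set X} {g : Fin n → G} {a : Fin n → ℤ} {M L : ℕ} {h : G} {y : X}

theorem SideState.zpow_neg_smul_mem (hσ : ∀ k : ℤ, k ≠ 0 → ∀ x ∉ U, σ ^ k • x ∈ U) (hLM : L < M)
    (hs : SideState σ U g a M L h y) {c : ℤ} (hc : (M : ℤ) ∣ c) (hch : ∀ j, h = g j → a j ≠ c) :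
    σ ^ (-c) • y ∈ U := by
  obtain ⟨s, q, hq, rfl, ⟨δ, -, i, r, hr0, hrL, rfl⟩ | ⟨j, hj, rfl⟩⟩ := hs
  · rw [smul_smul, ← zpow_add]
    refine hσ _ (fun h0 => ?_) q hq
    -- a run of fewer than `M` letters cannot bridge two multiples of `M`
    have hdvd : (M : ℤ) ∣ δ * r := by
      rw [show (δ : ℤ) * r = c - M * i by linarith]
      exact dvd_sub hc (dvd_mul_right _ _)
    have := Nat.le_of_dvd hr0 (Int.natCast_dvd_natCast.mp (Units.dvd_mul_left.mp hdvd))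
    omega
  · rw [smul_smul, ← zpow_add]
    exact hσ _ (by have := hch j hj; omega) q hq

theorem SideState.mem (hσ : ∀ k : ℤ, k ≠ 0 → ∀ x ∉ U, σ ^ k • x ∈ U) (hLM : L < M)
    (ha0 : ∀ j, a j ≠ 0) (hs : SideState σ U g a M L h y) : y ∈ U := by
  simpa using hs.zpow_neg_smul_mem hσ hLM (dvd_zero _) fun j _ => ha0 j

theorem SideState.zpow_smul (ha : ∀ j, (M : ℤ) ∣ a j) (hs : SideState σ U g a M L h y) {ε : ℤˣ}
    (hε : h ≠ (σ ^ (ε : ℤ))⁻¹) :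
    SideState σ U g a M (L + 1) (σ ^ (ε : ℤ)) (σ ^ (ε : ℤ) • y) := by
  obtain ⟨s, q, hq, rfl, ⟨δ, rfl, i, r, hr0, hrL, rfl⟩ | ⟨j, -, rfl⟩⟩ := hs
  · obtain rfl : δ = ε := by
      by_contra hne
      exact hε (by simp [Int.units_ne_iff_eq_neg.1 hne, zpow_neg])
    exact ⟨_, q, hq, by rw [smul_smul, ← zpow_add],
      .inl ⟨δ, rfl, i, r + 1, by omega, by omega, by push_cast; ring⟩⟩
  · obtain ⟨i, hi⟩ := ha j
    exact ⟨_, q, hq, by rw [smul_smul, ← zpow_add],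
      .inl ⟨ε, rfl, i, 1, one_pos, by omega, by rw [hi]; push_cast; ring⟩⟩

theorem sideState_zpow_smul_of_notMem (hy : y ∉ U) (ε : ℤˣ) :
    SideState σ U g a M (L + 1) (σ ^ (ε : ℤ)) (σ ^ (ε : ℤ) • y) :=
  ⟨ε, y, hy, rfl, .inl ⟨ε, rfl, 0, 1, one_pos, by omega, by simp⟩⟩

theorem sideState_smul_of_eq_mul {k : Fin n} {γ : G} (hg : g k = σ ^ a k * γ) (hy : γ • y ∉ U) :
    SideState σ U g a M L (g k) (g k • y) :=
  ⟨a k, γ • y, hy, by rw [hg, mul_smul], .inr ⟨k, rfl, rfl⟩⟩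

end SideState

def twistExp (M : ℕ) (j : Fin n) : ℤ := M * (j + 1)

theorem twistExp_dvd (M : ℕ) (j : Fin n) : (M : ℤ) ∣ twistExp M j := dvd_mul_right _ _

theorem twistExp_ne_zero {M : ℕ} (hM : M ≠ 0) (j : Fin n) : twistExp M j ≠ 0 := by
  unfold twistExp; positivity

theorem twistExp_injective {M : ℕ} (hM : M ≠ 0) : Function.Injective (twistExp (n := n) M) := by
  intro j k hjk
  unfold twistExp at hjk
  have : (j : ℤ) = k := by
    have := mul_left_cancel₀ (by exact_mod_cast hM) hjk
    omega
  exact Fin.ext (by exact_mod_cast this)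

def twistedGen (σ τ : G) (γ : Fin n → G) (M : ℕ) (j : Fin n) : G :=
  σ ^ twistExp M j * γ j * τ ^ twistExp M j

def twistedGens [DecidableEq G] (σ τ : G) (γ : Fin n → G) (M : ℕ) : Finset G :=
  insert σ (insert τ (Finset.univ.image (twistedGen σ τ γ M)))

variable {σ τ : G} {Uσ Uτ : Set X} {γ : Fin n → G} {M L : ℕ} {h : G} {y : X}

theorem NorthSouth.not_commute (hns : NorthSouth σ τ Uσ Uτ γ) {p : X} (hp : p ∉ Uσ ∪ Uτ) :
    ¬ Commute σ τ := by
  have hσ : ∀ x ∉ Uσ, σ • x ∈ Uσ := by simpa using hns.attracts_left 1 one_ne_zero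
  have hτ : ∀ x ∉ Uτ, τ • x ∈ Uτ := by simpa using hns.attracts_right 1 one_ne_zero
  have hστ : σ • τ • p ∈ Uσ :=
    hσ _ (hns.disjoint.notMem_of_mem_right (hτ p fun h => hp (.inr h)))
  have hτσ : τ • σ • p ∈ Uτ :=
    hτ _ (hns.disjoint.notMem_of_mem_left (hσ p fun h => hp (.inl h)))
  intro hcomm
  rw [smul_smul, ← hcomm.eq, ← smul_smul] at hτσ
  exact hns.disjoint.notMem_of_mem_left hστ hτσ

theorem closure_twistedGens [DecidableEq G] (hγ : Subgroup.closure (Set.range γ) = ⊤) :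
    Subgroup.closure (twistedGens σ τ γ M : Set G) = ⊤ := by
  set H := Subgroup.closure (twistedGens σ τ γ M : Set G)
  have mem_H : ∀ x ∈ twistedGens σ τ γ M, x ∈ H := fun x hx => Subgroup.subset_closure hx
  rw [eq_top_iff, ← hγ, Subgroup.closure_le]
  rintro _ ⟨j, rfl⟩
  have hγj : γ j = σ ^ (-twistExp M j) * twistedGen σ τ γ M j * τ ^ (-twistExp M j) := by
    simp only [twistedGen]; group
  rw [hγj]
  refine H.mul_mem (H.mul_mem (H.zpow_mem (mem_H _ ?_) _) (mem_H _ ?_)) (H.zpow_mem (mem_H _ ?_) _)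
    <;> simp [twistedGens]

theorem eq_of_mem_twistedGens_or_inv_mem [DecidableEq G] {x : G}
    (hx : x ∈ twistedGens σ τ γ M ∨ x⁻¹ ∈ twistedGens σ τ γ M) :
    (∃ ε : ℤˣ, x = σ ^ (ε : ℤ)) ∨ (∃ ε : ℤˣ, x = τ ^ (ε : ℤ)) ∨
      (∃ k, x = twistedGen σ τ γ M k) ∨ ∃ k, x = (twistedGen σ τ γ M k)⁻¹ := by
  simp only [twistedGens, Finset.mem_insert, Finset.mem_image, Finset.mem_univ, true_and] at hx
  rcases hx with (rfl | rfl | ⟨k, rfl⟩) | (rfl | rfl | ⟨k, hk⟩)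
  · exact .inl ⟨1, by simp⟩
  · exact .inr (.inl ⟨1, by simp⟩)
  · exact .inr (.inr (.inl ⟨k, rfl⟩))
  · exact .inl ⟨-1, by simp⟩
  · exact .inr (.inl ⟨-1, by simp⟩)
  · exact .inr (.inr (.inr ⟨k, inv_eq_iff_eq_inv.1 hk.symm⟩))

/-- The `τ`-side is the `σ`-side with `σ, g j, a j` replaced by `τ, g j⁻¹, -a j`, as
`g j⁻¹ = τ ^ (-a j) * ⋯`. -/
def PingPongState (σ τ : G) (Uσ Uτ : Set X) (γ : Fin n → G) (M L : ℕ) (h : G) (y : X) : Prop :=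
  SideState σ Uσ (twistedGen σ τ γ M) (twistExp M) M L h y ∨
    SideState τ Uτ (fun j => (twistedGen σ τ γ M j)⁻¹) (fun j => -twistExp M j) M L h y

theorem pingPongState_twistedGen_smul (hns : NorthSouth σ τ Uσ Uτ γ) {k : Fin n}
    (hy : τ ^ twistExp M k • y ∈ Uτ) :
    PingPongState σ τ Uσ Uτ γ M L (twistedGen σ τ γ M k) (twistedGen σ τ γ M k • y) :=
  .inl (sideState_smul_of_eq_mul (by rw [twistedGen, mul_assoc])
    (by rw [mul_smul]; exact hns.smul_notMem_left k _ hy))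

theorem pingPongState_twistedGen_inv_smul (hns : NorthSouth σ τ Uσ Uτ γ) {k : Fin n}
    (hy : σ ^ (-twistExp M k) • y ∈ Uσ) :
    PingPongState σ τ Uσ Uτ γ M L (twistedGen σ τ γ M k)⁻¹ ((twistedGen σ τ γ M k)⁻¹ • y) :=
  .inr (sideState_smul_of_eq_mul (γ := (γ k)⁻¹ * σ ^ (-twistExp M k))
    (by simp only [twistedGen, mul_inv_rev, zpow_neg, mul_assoc])
    (by rw [mul_smul]; exact hns.inv_smul_notMem_right k _ hy))

theorem pingPongState_letter_smul_of_notMem [DecidableEq G] (hns : NorthSouth σ τ Uσ Uτ γ)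
    (hM : M ≠ 0) {x : G} (hx : x ∈ twistedGens σ τ γ M ∨ x⁻¹ ∈ twistedGens σ τ γ M)
    (hyσ : y ∉ Uσ) (hyτ : y ∉ Uτ) : PingPongState σ τ Uσ Uτ γ M (L + 1) x (x • y) := by
  rcases eq_of_mem_twistedGens_or_inv_mem hx with ⟨ε, rfl⟩ | ⟨ε, rfl⟩ | ⟨k, rfl⟩ | ⟨k, rfl⟩
  · exact .inl (sideState_zpow_smul_of_notMem hyσ ε)
  · exact .inr (sideState_zpow_smul_of_notMem hyτ ε)
  · exact pingPongState_twistedGen_smul hns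
      (hns.attracts_right _ (twistExp_ne_zero hM k) _ hyτ)
  · exact pingPongState_twistedGen_inv_smul hns
      (hns.attracts_left _ (neg_ne_zero.2 (twistExp_ne_zero hM k)) _ hyσ)

theorem PingPongState.letter_smul [DecidableEq G] (hns : NorthSouth σ τ Uσ Uτ γ) (hLM : L < M)
    (hs : PingPongState σ τ Uσ Uτ γ M L h y) {x : G}
    (hx : x ∈ twistedGens σ τ γ M ∨ x⁻¹ ∈ twistedGens σ τ γ M) (hxh : h ≠ x⁻¹) :
    PingPongState σ τ Uσ Uτ γ M (L + 1) x (x • y) := by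
  have hM : M ≠ 0 := by omega
  rcases hs with hs | hs
  · have hyτ : y ∉ Uτ :=
      hns.disjoint.notMem_of_mem_left (hs.mem hns.attracts_left hLM (twistExp_ne_zero hM))
    rcases eq_of_mem_twistedGens_or_inv_mem hx with ⟨ε, rfl⟩ | ⟨ε, rfl⟩ | ⟨k, rfl⟩ | ⟨k, rfl⟩
    · exact .inl (hs.zpow_smul (twistExp_dvd M) hxh)
    · exact .inr (sideState_zpow_smul_of_notMem hyτ ε)
    · exact pingPongState_twistedGen_smul hns
        (hns.attracts_right _ (twistExp_ne_zero hM k) _ hyτ)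
    · refine pingPongState_twistedGen_inv_smul hns
        (hs.zpow_neg_smul_mem hns.attracts_left hLM (twistExp_dvd M k) fun j hj => ?_)
      rw [inv_inv] at hxh
      exact (twistExp_injective hM).ne fun hjk => hxh (hjk ▸ hj)
  · have hyσ : y ∉ Uσ := hns.disjoint.notMem_of_mem_right
      (hs.mem hns.attracts_right hLM fun j => neg_ne_zero.2 (twistExp_ne_zero hM j))
    rcases eq_of_mem_twistedGens_or_inv_mem hx with ⟨ε, rfl⟩ | ⟨ε, rfl⟩ | ⟨k, rfl⟩ | ⟨k, rfl⟩
    · exact .inl (sideState_zpow_smul_of_notMem hyσ ε)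
    · exact .inr (hs.zpow_smul (fun j => (twistExp_dvd M j).neg_right) hxh)
    · refine pingPongState_twistedGen_smul hns ?_
      simpa using hs.zpow_neg_smul_mem hns.attracts_right hLM (twistExp_dvd M k).neg_right
        fun j hj => (neg_injective.comp (twistExp_injective hM)).ne fun hjk => hxh (hjk ▸ hj)
    · exact pingPongState_twistedGen_inv_smul hns
        (hns.attracts_left _ (neg_ne_zero.2 (twistExp_ne_zero hM k)) _ hyσ)

theorem PingPongState.mem (hns : NorthSouth σ τ Uσ Uτ γ) (hLM : L < M)
    (hs : PingPongState σ τ Uσ Uτ γ M L h y) : y ∈ Uσ ∪ Uτ := by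
  have hM : M ≠ 0 := by omega
  rcases hs with hs | hs
  · exact .inl (hs.mem hns.attracts_left hLM (twistExp_ne_zero hM))
  · exact .inr (hs.mem hns.attracts_right hLM fun j => neg_ne_zero.2 (twistExp_ne_zero hM j))

theorem pingPongState_of_chain [DecidableEq G] (hns : NorthSouth σ τ Uσ Uτ γ) {p : X}
    (hp : p ∉ Uσ ∪ Uτ) : ∀ (x : G) (u : List G),
    (∀ g ∈ x :: u, g ∈ twistedGens σ τ γ M ∨ g⁻¹ ∈ twistedGens σ τ γ M) →
    List.IsChain (fun a b => b ≠ a⁻¹) (x :: u) → (x :: u).length < M →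
    PingPongState σ τ Uσ Uτ γ M (x :: u).length x ((x :: u).prod • p)
  | x, [], hS, _, hL => by
    simpa using pingPongState_letter_smul_of_notMem (L := 0) hns (by simp at hL; omega)
      (hS x (by simp)) (fun h => hp (.inl h)) (fun h => hp (.inr h))
  | x, y :: u, hS, hc, hL => by
    rw [List.isChain_cons_cons] at hc
    have hs := pingPongState_of_chain hns hp y u (fun g hg => hS g (.tail _ hg)) hc.2
      (by simp at hL ⊢; omega)
    rw [List.prod_cons, mul_smul]
    exact hs.letter_smul hns (by simp at hL ⊢; omega) (hS x (by simp)) hc.1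

theorem le_girthWith_twistedGens [DecidableEq G] (hns : NorthSouth σ τ Uσ Uτ γ) {p : X}
    (hp : p ∉ Uσ ∪ Uτ) : (M : ℕ∞) ≤ girthWith (twistedGens σ τ γ M : Set G) := by
  refine le_iInf₂ fun w ⟨hne, hS, hc, hprod⟩ => ?_
  by_contra! hlt
  have hlt : w.length < M := by exact_mod_cast hlt
  obtain ⟨x, u, rfl⟩ := List.exists_cons_of_ne_nil hne
  have := (pingPongState_of_chain hns hp x u hS hc hlt).mem hns hlt
  rw [hprod, one_smul] at this
  exact hp this

end PingPong

/-- **North–south dynamics criterion for infinite girth.** -/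
theorem infinite_girth_of_north_south {G X : Type*} [Group G] [MulAction G X]
    (n : ℕ) (γ : Fin n → G) (hgen : Subgroup.closure (Set.range γ) = ⊤)
    (σ τ : G) (Uσ Uτ : Set X)
    (h1σ : ∀ k : ℤ, k ≠ 0 → (σ ^ k) • (Set.univ \ Uσ) ⊆ Uσ)
    (h1τ : ∀ k : ℤ, k ≠ 0 → (τ ^ k) • (Set.univ \ Uτ) ⊆ Uτ)
    (h2 : Uσ ∩ Uτ = ∅)
    (h3στ : ∀ j, (γ j • Uτ) ∩ Uσ = ∅ ∧ ((γ j)⁻¹ • Uτ) ∩ Uσ = ∅)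
    (h3τσ : ∀ j, (γ j • Uσ) ∩ Uτ = ∅ ∧ ((γ j)⁻¹ • Uσ) ∩ Uτ = ∅)
    (h4 : (Set.univ \ ((Uσ ∪ Uτ) ∪
      ⋃ j, (γ j • (Uσ ∪ Uτ) ∪ (γ j)⁻¹ • (Uσ ∪ Uτ)))).Nonempty) :
    ¬ IsCyclic G ∧ groupGirth G = ⊤ := by
  classical
  have hns : NorthSouth σ τ Uσ Uτ γ :=
    { attracts_left := fun k hk x hx => h1σ k hk (Set.smul_mem_smul_set ⟨trivial, hx⟩)
      attracts_right := fun k hk x hx => h1τ k hk (Set.smul_mem_smul_set ⟨trivial, hx⟩)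
      disjoint := Set.disjoint_iff_inter_eq_empty.2 h2
      smul_notMem_left := fun j x hx hx' => Set.eq_empty_iff_forall_notMem.1 (h3στ j).1 _
        ⟨Set.smul_mem_smul_set hx, hx'⟩
      inv_smul_notMem_right := fun j x hx hx' => Set.eq_empty_iff_forall_notMem.1 (h3τσ j).2 _
        ⟨Set.smul_mem_smul_set hx, hx'⟩ }
  obtain ⟨p, -, hp⟩ := h4
  have hp : p ∉ Uσ ∪ Uτ := fun h => hp (.inl h)
  refine ⟨fun hcyc => hns.not_commute hp (by let := hcyc.commGroup; exact Commute.all σ τ), ?_⟩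
  refine ENat.eq_top_iff_forall_ge.2 fun M => (le_girthWith_twistedGens hns hp).trans ?_
  exact le_iSup₂_of_le (f := fun S (_ : S ∈ {S : Finset G | Subgroup.closure (S : Set G) = ⊤}) =>
    girthWith (S : Set G)) _ (closure_twistedGens hgen) le_rfl
end
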